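/- arXiv:1002.0019 — 3 statements merged into one kernel-verified Lean document; each statement's English description precedes it below -/
import Mathlib

section
/- Let A be an n×m real matrix, T and S disjoint subsets of column indices, and λ > 0. Define Q = A_{T∪S}' A_{T∪S} + λ D where D is the block-diagonal matrix equal to the identity on the T-block and zero on the S-block. If the submatrix A_S has full column rank, then Q is invertible. -/
open Matrix BigOperators Finset

noncomputable section

abbrev Idx {m : ℕ} (T : Finset (Fin m)) := {j : Fin m // j ∈ T}

/-- Submatrix of `A` consisting of the columns indexed by `T`. -/
def colsub {n m : ℕ} (A : Matrix (Fin n) (Fin m) ℝ) (T : Finset (Fin m)) :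
    Matrix (Fin n) (Idx T) ℝ := Matrix.of fun i j => A i j.1

/-- Euclidean (ℓ2) norm of a finitely indexed vector. -/
def l2 {α : Type*} [Fintype α] (v : α → ℝ) : ℝ := Real.sqrt (∑ i, v i ^ 2)

/-- ℓ1 norm. -/
def l1 {α : Type*} [Fintype α] (v : α → ℝ) : ℝ := ∑ i, |v i|

/-- ℓ∞ (sup) norm. -/
def linf {α : Type*} [Fintype α] (v : α → ℝ) : ℝ := ⨆ i, |v i|

/-- Spectral (ℓ2 operator) norm of a matrix. -/
def spec {α β : Type*} [Fintype α] [Fintype β] [DecidableEq β] (M : Matrix α β ℝ) : ℝ :=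
  ‖LinearMap.toContinuousLinearMap (Matrix.toEuclideanLin M)‖

/-- `Q_{T,λ}(S) = A_{T∪S}' A_{T∪S} + λ·diag(I_T, 0_S)`. -/
def Qmat {n m : ℕ} (A : Matrix (Fin n) (Fin m) ℝ) (T S : Finset (Fin m)) (lam : ℝ) :
    Matrix (Idx (T ∪ S)) (Idx (T ∪ S)) ℝ :=
  (colsub A (T ∪ S))ᵀ * colsub A (T ∪ S) +
    lam • (Matrix.of (fun i j => if i = j ∧ (i : Fin m) ∈ T then (1 : ℝ) else 0) :
      Matrix (Idx (T ∪ S)) (Idx (T ∪ S)) ℝ)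

/-- `M_{T,λ} = I − A_T (A_T'A_T + λ I_T)⁻¹ A_T'`. -/
def Mmat {n m : ℕ} (A : Matrix (Fin n) (Fin m) ℝ) (T : Finset (Fin m)) (lam : ℝ) :
    Matrix (Fin n) (Fin n) ℝ :=
  1 - colsub A T * ((colsub A T)ᵀ * colsub A T + lam • 1)⁻¹ * (colsub A T)ᵀ

/-- `P_{T,λ}(Δ) = (A_Δ' M A_Δ)⁻¹`. -/
def Pmat {n m : ℕ} (A : Matrix (Fin n) (Fin m) ℝ) (T Δ : Finset (Fin m)) (lam : ℝ) :
    Matrix (Idx Δ) (Idx Δ) ℝ :=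
  ((colsub A Δ)ᵀ * Mmat A T lam * colsub A Δ)⁻¹

/-- The regularized least-squares estimate supported on `T ∪ S`:
`c_{T∪S} = Q⁻¹ (A_{T∪S}' y + [λμ̂_T ; 0_S])`, zero outside `T ∪ S`. -/
def cvec {n m : ℕ} (A : Matrix (Fin n) (Fin m) ℝ) (T S : Finset (Fin m)) (lam : ℝ)
    (y : Fin n → ℝ) (μ : Fin m → ℝ) : Fin m → ℝ :=
  fun i => if h : i ∈ T ∪ S then
    (Qmat A T S lam)⁻¹.mulVec
      (fun j => (∑ k, A k j.1 * y k) + (if (j : Fin m) ∈ T then lam * μ j.1 else 0)) ⟨i, h⟩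
  else 0

/-- The reg-mod-BPDN objective
`L(b) = γ‖b_{T^c}‖₁ + (1/2)‖y − Ab‖₂² + (λ/2)‖b_T − μ̂_T‖₂²`. -/
def Lobj {n m : ℕ} (A : Matrix (Fin n) (Fin m) ℝ) (T : Finset (Fin m)) (γ lam : ℝ)
    (y : Fin n → ℝ) (μ : Fin m → ℝ) (b : Fin m → ℝ) : ℝ :=
  γ * (∑ i ∈ Tᶜ, |b i|) + (1/2) * (∑ i, (y i - A.mulVec b i) ^ 2) +
    (lam/2) * (∑ i ∈ T, (b i - μ i) ^ 2)

/-- The quadratic part `L₁(b) = (1/2)‖y − Ab‖₂² + (λ/2)‖b_T − μ̂_T‖₂²`. -/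
def L1obj {n m : ℕ} (A : Matrix (Fin n) (Fin m) ℝ) (T : Finset (Fin m)) (lam : ℝ)
    (y : Fin n → ℝ) (μ : Fin m → ℝ) (b : Fin m → ℝ) : ℝ :=
  (1/2) * (∑ i, (y i - A.mulVec b i) ^ 2) + (lam/2) * (∑ i ∈ T, (b i - μ i) ^ 2)

/-- `ERC_{T,λ}(Δ) = 1 − max_{ω∉T∪Δ} ‖P(Δ) A_Δ' M A_ω‖₁`. -/
def ERC {n m : ℕ} (A : Matrix (Fin n) (Fin m) ℝ) (T Δ : Finset (Fin m)) (lam : ℝ) : ℝ :=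
  1 - ⨆ ω : Idx ((T ∪ Δ)ᶜ),
    l1 ((Pmat A T Δ lam * (colsub A Δ)ᵀ * Mmat A T lam).mulVec (fun i => A i ω.1))

/-- `f₁(Δ)`. -/
def f1 {n m : ℕ} (A : Matrix (Fin n) (Fin m) ℝ) (T Δ : Finset (Fin m)) (lam : ℝ) : ℝ :=
  Real.sqrt
    (spec (((colsub A T)ᵀ * colsub A T + lam • 1)⁻¹ * (colsub A T)ᵀ * colsub A Δ *
        Pmat A T Δ lam) ^ 2 + spec (Pmat A T Δ lam) ^ 2)

/-- `f₂(Δ) = ‖Q⁻¹‖₂`. -/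
def f2 {n m : ℕ} (A : Matrix (Fin n) (Fin m) ℝ) (T Δ : Finset (Fin m)) (lam : ℝ) : ℝ :=
  spec ((Qmat A T Δ lam)⁻¹)

/-- `f₃(Δ) = ‖Q⁻¹ A_{T∪Δ}'‖₂`. -/
def f3 {n m : ℕ} (A : Matrix (Fin n) (Fin m) ℝ) (T Δ : Finset (Fin m)) (lam : ℝ) : ℝ :=
  spec ((Qmat A T Δ lam)⁻¹ * (colsub A (T ∪ Δ))ᵀ)

/-- `f₄(Δ̃) = sqrt(‖Q(Δ̃)⁻¹ A_{T∪Δ̃}' A_{Δ∖Δ̃}‖₂² + 1)`. -/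
def f4 {n m : ℕ} (A : Matrix (Fin n) (Fin m) ℝ) (T Δ Δt : Finset (Fin m)) (lam : ℝ) : ℝ :=
  Real.sqrt
    (spec ((Qmat A T Δt lam)⁻¹ * (colsub A (T ∪ Δt))ᵀ * colsub A (Δ \ Δt)) ^ 2 + 1)

/-- Numerator of `γ*`: `‖A_{(T∪Δ)^c}'(y − A c(Δ))‖_∞`. -/
def gammaNum {n m : ℕ} (A : Matrix (Fin n) (Fin m) ℝ) (T Δ : Finset (Fin m)) (lam : ℝ)
    (y : Fin n → ℝ) (μ : Fin m → ℝ) : ℝ :=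
  linf (fun j : Idx ((T ∪ Δ)ᶜ) =>
    ∑ i, A i j.1 * (y i - A.mulVec (cvec A T Δ lam y μ) i))

/-- `γ*_{T,λ}(Δ)`. -/
def gammaStar {n m : ℕ} (A : Matrix (Fin n) (Fin m) ℝ) (T Δ : Finset (Fin m)) (lam : ℝ)
    (y : Fin n → ℝ) (μ : Fin m → ℝ) : ℝ :=
  gammaNum A T Δ lam y μ / ERC A T Δ lam


/-- If `λ > 0` and `A_S` has full column rank then
`Q = A_{T∪S}'A_{T∪S} + λ·diag(I_T,0_S)` is invertible. -/
theorem stmt0 {n m : ℕ} (A : Matrix (Fin n) (Fin m) ℝ) (T S : Finset (Fin m))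
    (hTS : Disjoint T S) (lam : ℝ) (hlam : 0 < lam)
    (hrank : LinearIndependent ℝ (fun j : Idx S => fun i : Fin n => A i j.1)) :
    IsUnit (Qmat A T S lam) := by
  rw [Matrix.isUnit_iff_isUnit_det, isUnit_iff_ne_zero]
  intro hdet
  obtain ⟨v, hv, hQv⟩ := Matrix.exists_mulVec_eq_zero_iff.mpr hdet
  set B := colsub A (T ∪ S) with hB
  -- key quadratic form computation
  have hquad : v ⬝ᵥ (Qmat A T S lam *ᵥ v)
      = (B *ᵥ v) ⬝ᵥ (B *ᵥ v) + lam * ∑ j : Idx (T ∪ S),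
          (if (j : Fin m) ∈ T then v j ^ 2 else 0) := by
    unfold Qmat
    rw [Matrix.add_mulVec, Matrix.smul_mulVec, dotProduct_add, dotProduct_smul,
      ← Matrix.mulVec_mulVec, Matrix.dotProduct_mulVec, Matrix.vecMul_transpose]
    congr 1
    simp only [smul_eq_mul]
    congr 1
    simp only [Matrix.mulVec, dotProduct, Matrix.of_apply]
    apply Finset.sum_congr rfl
    intro j _
    rw [show (∑ k : Idx (T ∪ S), (if j = k ∧ (j : Fin m) ∈ T then (1:ℝ) else 0) * v k)
        = ∑ k : Idx (T ∪ S), (if j = k then (if (j : Fin m) ∈ T then v k else 0) else 0) from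
      Finset.sum_congr rfl fun k _ => by by_cases h1 : j = k <;> by_cases h2 : (j:Fin m) ∈ T <;>
        simp [h1, h2], Finset.sum_ite_eq (Finset.univ) j (fun k => if (j:Fin m) ∈ T then v k else 0)]
    by_cases h : (j : Fin m) ∈ T <;> simp [h] <;> ring
  rw [hQv, dotProduct_zero] at hquad
  have h1 : (0:ℝ) ≤ (B *ᵥ v) ⬝ᵥ (B *ᵥ v) := by
    simp only [dotProduct]
    exact Finset.sum_nonneg fun i _ => mul_self_nonneg _
  have h2 : (0:ℝ) ≤ ∑ j : Idx (T ∪ S), (if (j : Fin m) ∈ T then v j ^ 2 else 0) :=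
    Finset.sum_nonneg fun j _ => by positivity
  have h2' : (0:ℝ) ≤ lam * ∑ j : Idx (T ∪ S), (if (j : Fin m) ∈ T then v j ^ 2 else 0) :=
    mul_nonneg hlam.le h2
  have hBv : (B *ᵥ v) ⬝ᵥ (B *ᵥ v) = 0 := le_antisymm (by linarith) h1
  have hTsum : ∑ j : Idx (T ∪ S), (if (j : Fin m) ∈ T then v j ^ 2 else 0) = 0 := by
    have : lam * ∑ j : Idx (T ∪ S), (if (j : Fin m) ∈ T then v j ^ 2 else 0) = 0 := by
      linarith
    exact (mul_eq_zero.mp this).resolve_left hlam.ne'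
  -- v vanishes on T
  have hvT : ∀ j : Idx (T ∪ S), (j : Fin m) ∈ T → v j = 0 := by
    intro j hj
    have := (Finset.sum_eq_zero_iff_of_nonneg (fun j _ => by positivity)).mp hTsum j
      (Finset.mem_univ j)
    rw [if_pos hj] at this
    exact pow_eq_zero_iff (two_ne_zero) |>.mp this
  -- B *ᵥ v = 0
  have hBv0 : B *ᵥ v = 0 := by
    funext i
    have := (Finset.sum_eq_zero_iff_of_nonneg (fun i _ => mul_self_nonneg ((B *ᵥ v) i))).mp
      hBv i (Finset.mem_univ i)
    have := mul_self_eq_zero.mp this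
    simpa using this
  -- restrict v to S
  set w : Idx S → ℝ := fun j => v ⟨j.1, Finset.mem_union_right _ j.2⟩ with hw
  have hwsum : ∀ i : Fin n, ∑ j : Idx S, w j * A i j.1 = 0 := by
    intro i
    have hi : (B *ᵥ v) i = 0 := by rw [hBv0]; rfl
    set vt : Fin m → ℝ := fun k => if h : k ∈ T ∪ S then v ⟨k, h⟩ else 0 with hvt
    have hsum : (B *ᵥ v) i = ∑ k ∈ T ∪ S, A i k * vt k := by
      rw [Matrix.mulVec, dotProduct]
      rw [← Finset.sum_coe_sort (T ∪ S) (fun k => A i k * vt k)]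
      apply Finset.sum_congr rfl
      intro j _
      simp only [hB, colsub, Matrix.of_apply, hvt, dif_pos j.2, Subtype.coe_eta]
    rw [hsum, Finset.sum_union hTS] at hi
    have hT0 : ∑ k ∈ T, A i k * vt k = 0 := by
      apply Finset.sum_eq_zero
      intro k hk
      have : vt k = 0 := by
        simp only [hvt, dif_pos (Finset.mem_union_left S hk)]
        exact hvT _ hk
      rw [this, mul_zero]
    rw [hT0, zero_add] at hi
    rw [← Finset.sum_coe_sort S (fun k => A i k * vt k)] at hi
    rw [← hi]
    apply Finset.sum_congr rfl
    intro j _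
    simp only [hvt, hw, dif_pos (Finset.mem_union_right T j.2)]
    ring
  have hw0 : ∀ j : Idx S, w j = 0 := by
    have := Fintype.linearIndependent_iff.mp hrank w ?_
    · exact this
    · funext i
      simpa [Finset.sum_apply] using hwsum i
  -- v = 0, contradiction
  apply hv
  funext j
  rcases Finset.mem_union.mp j.2 with h | h
  · exact hvT j h
  · have := hw0 ⟨j.1, h⟩
    simpa [hw] using this
end
end

section
/- Suppose Q_{T,λ}(Δ) is invertible. Let d(Δ) be the minimizer over vectors supported on T∪Δ of L(b) = γ‖b_{T^c}‖₁ + (1/2)‖y − Ab‖₂² + (λ/2)‖b_T − μ̂_T‖₂², and let c(Δ) be the minimizer over the same set of the quadratic part L₁(b). Then ‖d(Δ) − c(Δ)‖₂ ≤ γ√|Δ| · f₁(Δ), where f₁(Δ) = sqrt( ‖(A_T'A_T + λI_T)^{-1} A_T' A_Δ P(Δ)‖₂² + ‖P(Δ)‖₂² ), with M = I − A_T(A_T'A_T + λI_T)^{-1}A_T' and P(Δ) = (A_Δ' M A_Δ)^{-1}. -/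
open Matrix BigOperators Finset

noncomputable section

/-!
On vectors supported on `T ∪ Δ` the gradient `g` of `L₁` is affine with Hessian `Q = Q_{T,λ}(Δ)`.
Perturbing one coordinate at a time, `g(c)` vanishes on `T ∪ Δ`, while `g(d)` vanishes on `T` and
is bounded by `γ` on `Δ` (a subgradient of the `ℓ¹` term). Hence `Q (d - c) = (0, z)` with
`|z_j| ≤ γ`. Since `Q` is positive semidefinite and invertible it is positive definite, so the block
`A_T'A_T + λI` and its Schur complement `A_Δ'MA_Δ = P⁻¹` are invertible, and block elimination gives
`d - c = (-(A_T'A_T + λI)⁻¹A_T'A_Δ P z, P z)`, of norm at most `f₁ ‖z‖₂ ≤ f₁ γ √|Δ|`.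
-/

theorem abs_le_of_forall_mul_add_sq_nonneg {g a c : ℝ}
    (h : ∀ t : ℝ, 0 ≤ t * g + t ^ 2 * a + c * |t|) : |g| ≤ c := by
  refine le_of_forall_pos_le_add fun ε hε => ?_
  set s : ℝ := ε / (|a| + 1)
  have hs : 0 < s := by positivity
  have hsa : s * |a| ≤ ε := by
    have : s * (|a| + 1) = ε := div_mul_cancel₀ _ (by positivity)
    nlinarith
  have h₁ := h s
  have h₂ := h (-s)
  rw [abs_of_pos hs] at h₁
  rw [abs_neg, abs_of_pos hs] at h₂
  have ha := neg_abs_le a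
  have ha' := le_abs_self a
  rw [abs_le]
  constructor <;> nlinarith

theorem sum_abs_add_single_le {ι : Type*} [DecidableEq ι] (s : Finset ι) (b : ι → ℝ) (j : ι)
    (t : ℝ) :
    ∑ i ∈ s, |(b + Pi.single j t : ι → ℝ) i| ≤ ∑ i ∈ s, |b i| + if j ∈ s then |t| else 0 := by
  have hsingle : ∀ i, |(Pi.single j t : ι → ℝ) i| = (Pi.single j |t| : ι → ℝ) i := fun i => by
    by_cases hi : i = j
    · subst hi; simp
    · simp [hi]
  calc ∑ i ∈ s, |(b + Pi.single j t : ι → ℝ) i|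
        ≤ ∑ i ∈ s, (|b i| + |(Pi.single j t : ι → ℝ) i|) := sum_le_sum fun i _ => abs_add_le _ _
    _ = _ := by simp only [sum_add_distrib, hsingle, sum_pi_single']

theorem sum_coe_eq_sum_of_notMem {ι : Type*} [Fintype ι] {U : Finset ι} {f : ι → ℝ}
    (hf : ∀ i ∉ U, f i = 0) : ∑ i : U, f i = ∑ i, f i := by
  rw [sum_coe_sort]
  exact sum_subset (subset_univ U) fun i _ hi => hf i hi

theorem sum_eq_sum_coe_add_of_disjoint {ι : Type*} [Fintype ι] [DecidableEq ι] {T Δ : Finset ι}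
    (hTΔ : Disjoint T Δ) {f : ι → ℝ} (hf : ∀ i ∉ T ∪ Δ, f i = 0) :
    ∑ i, f i = ∑ i : T, f i + ∑ i : Δ, f i := by
  rw [← sum_subset (subset_univ (T ∪ Δ)) fun i _ hi => hf i hi, sum_union hTΔ,
    sum_coe_sort T, sum_coe_sort Δ]

theorem eq_schur_of_fromBlocks_mulVec {ι κ K : Type*} [Fintype ι] [Fintype κ] [DecidableEq ι]
    [DecidableEq κ] [CommRing K] {B : Matrix ι ι K} {C : Matrix ι κ K} {C' : Matrix κ ι K}
    {D : Matrix κ κ K} (hB : IsUnit B.det) (hS : IsUnit (D - C' * B⁻¹ * C).det)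
    {x : ι → K} {w z : κ → K}
    (h : fromBlocks B C C' D *ᵥ Sum.elim x w = Sum.elim (0 : ι → K) z) :
    w = (D - C' * B⁻¹ * C)⁻¹ *ᵥ z ∧ x = -(B⁻¹ * C * (D - C' * B⁻¹ * C)⁻¹) *ᵥ z := by
  rw [fromBlocks_mulVec, Sum.elim_comp_inl, Sum.elim_comp_inr] at h
  have h₁ : B *ᵥ x + C *ᵥ w = 0 := by simpa using congrArg (· ∘ Sum.inl) h
  have h₂ : C' *ᵥ x + D *ᵥ w = z := by simpa using congrArg (· ∘ Sum.inr) h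
  have hx : x = -((B⁻¹ * C) *ᵥ w) := by
    have := congrArg (B⁻¹ *ᵥ ·) h₁
    simp only [mulVec_add, mulVec_mulVec, nonsing_inv_mul _ hB, one_mulVec, mulVec_zero] at this
    exact eq_neg_of_add_eq_zero_left this
  have hw : (D - C' * B⁻¹ * C) *ᵥ w = z := by
    rw [← h₂, hx, sub_mulVec, mulVec_neg, mulVec_mulVec, Matrix.mul_assoc]
    abel
  have hw' : w = (D - C' * B⁻¹ * C)⁻¹ *ᵥ z := by
    rw [← hw, mulVec_mulVec, nonsing_inv_mul _ hS, one_mulVec]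
  refine ⟨hw', ?_⟩
  rw [hx, hw', mulVec_mulVec, neg_mulVec]

section Objective

variable {n m : ℕ} (A : Matrix (Fin n) (Fin m) ℝ) (T : Finset (Fin m)) (lam : ℝ)
  (y : Fin n → ℝ) (μ : Fin m → ℝ)

def L1grad (b : Fin m → ℝ) : Fin m → ℝ :=
  Aᵀ *ᵥ (A *ᵥ b - y) + fun j => if j ∈ T then lam * (b j - μ j) else 0

theorem L1obj_add_single (b : Fin m → ℝ) (j : Fin m) (t : ℝ) :
    L1obj A T lam y μ (b + Pi.single j t) = L1obj A T lam y μ b + t * L1grad A T lam y μ b j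
      + t ^ 2 * ((∑ i, A i j ^ 2 + if j ∈ T then lam else 0) / 2) := by
  have hgrad : L1grad A T lam y μ b j
      = ∑ i, A i j * ((A *ᵥ b) i - y i) + if j ∈ T then lam * (b j - μ j) else 0 := rfl
  have hres : ∑ i, (y i - (A *ᵥ (b + Pi.single j t)) i) ^ 2
      = ∑ i, (y i - (A *ᵥ b) i) ^ 2 + t * (2 * ∑ i, A i j * ((A *ᵥ b) i - y i))
        + t ^ 2 * ∑ i, A i j ^ 2 := by
    have hcol : ∀ i, (A *ᵥ Pi.single j t) i = A i j * t := fun i => dotProduct_single _ _ _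
    simp only [mulVec_add, Pi.add_apply, hcol, mul_sum, ← sum_add_distrib]
    exact sum_congr rfl fun i _ => by ring
  have hreg : ∑ i ∈ T, ((b + Pi.single j t : Fin m → ℝ) i - μ i) ^ 2
      = ∑ i ∈ T, (b i - μ i) ^ 2 + if j ∈ T then 2 * t * (b j - μ j) + t ^ 2 else 0 := by
    rw [← sum_ite_eq' T j (fun i => 2 * t * (b i - μ i) + t ^ 2), ← sum_add_distrib]
    refine sum_congr rfl fun i _ => ?_
    by_cases hi : i = j
    · subst hi; simp only [Pi.add_apply, Pi.single_eq_same, if_true]; ring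
    · simp [hi]
  rw [L1obj, L1obj, hres, hreg, hgrad]
  split_ifs <;> ring

theorem Lobj_eq (γ : ℝ) (b : Fin m → ℝ) :
    Lobj A T γ lam y μ b = γ * ∑ i ∈ Tᶜ, |b i| + L1obj A T lam y μ b := by
  simp only [Lobj, L1obj]; ring

theorem Lobj_zero : Lobj A T 0 lam y μ = L1obj A T lam y μ :=
  funext fun b => by simp [Lobj_eq]

variable {A T lam y μ}

theorem abs_L1grad_le_of_isMinOn {S : Finset (Fin m)} {γ : ℝ} (hγ : 0 ≤ γ) {d : Fin m → ℝ}
    (hd0 : ∀ i ∉ S, d i = 0)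
    (hdmin : ∀ b : Fin m → ℝ, (∀ i ∉ S, b i = 0) →
      Lobj A T γ lam y μ d ≤ Lobj A T γ lam y μ b)
    {j : Fin m} (hj : j ∈ S) : |L1grad A T lam y μ d j| ≤ if j ∈ T then 0 else γ := by
  refine abs_le_of_forall_mul_add_sq_nonneg
    (a := (∑ i, A i j ^ 2 + if j ∈ T then lam else 0) / 2) fun t => ?_
  have hmin := hdmin (d + Pi.single j t : Fin m → ℝ) fun i hi => by
    have hij : i ≠ j := fun h => hi (h ▸ hj)
    simp [hd0 i hi, hij]
  have hl1 := mul_le_mul_of_nonneg_left (sum_abs_add_single_le Tᶜ d j t) hγ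
  rw [Lobj_eq, Lobj_eq, L1obj_add_single] at hmin
  by_cases hjT : j ∈ T
  · simp only [hjT, if_true, mem_compl, not_true_eq_false, if_false] at hl1 hmin ⊢
    linarith
  · simp only [hjT, if_false, mem_compl, not_false_eq_true, if_true] at hl1 hmin ⊢
    linarith

theorem L1grad_eq_zero_of_isMinOn {S : Finset (Fin m)} {c : Fin m → ℝ}
    (hc0 : ∀ i ∉ S, c i = 0)
    (hcmin : ∀ b : Fin m → ℝ, (∀ i ∉ S, b i = 0) →
      L1obj A T lam y μ c ≤ L1obj A T lam y μ b)
    {j : Fin m} (hj : j ∈ S) : L1grad A T lam y μ c j = 0 := by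
  rw [← Lobj_zero] at hcmin
  simpa using abs_L1grad_le_of_isMinOn le_rfl hc0 hcmin hj

end Objective

section Ridge

variable {n m : ℕ} (A : Matrix (Fin n) (Fin m) ℝ) (T : Finset (Fin m)) (lam : ℝ)

def L1hess (h : Fin m → ℝ) : Fin m → ℝ :=
  Aᵀ *ᵥ (A *ᵥ h) + fun j => if j ∈ T then lam * h j else 0

theorem L1grad_sub (y : Fin n → ℝ) (μ b b' : Fin m → ℝ) :
    L1grad A T lam y μ b - L1grad A T lam y μ b' = L1hess A T lam (b - b') := by
  ext j
  simp only [L1grad, L1hess, Pi.add_apply, Pi.sub_apply, mulVec_sub]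
  split_ifs <;> ring

theorem Qmat_eq (S : Finset (Fin m)) :
    Qmat A T S lam = (colsub A (T ∪ S))ᵀ * colsub A (T ∪ S)
      + lam • diagonal fun i : Idx (T ∪ S) => if (i : Fin m) ∈ T then 1 else 0 := by
  ext i j
  by_cases hij : i = j
  · subst hij; simp [Qmat]
  · simp [Qmat, hij]

theorem posSemidef_Qmat (S : Finset (Fin m)) (hlam : 0 ≤ lam) : (Qmat A T S lam).PosSemidef := by
  rw [Qmat_eq, ← conjTranspose_eq_transpose_of_trivial]
  refine (posSemidef_conjTranspose_mul_self _).add (PosSemidef.smul ?_ hlam)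
  exact PosSemidef.diagonal fun i => by dsimp; split_ifs <;> norm_num

theorem colsub_mulVec_restrict {U : Finset (Fin m)} {h : Fin m → ℝ} (hh : ∀ i ∉ U, h i = 0) :
    colsub A U *ᵥ U.restrict h = A *ᵥ h :=
  funext fun i => sum_coe_eq_sum_of_notMem (f := fun j => A i j * h j) fun j hj => by
    simp [hh j hj]

theorem Qmat_mulVec_restrict (S : Finset (Fin m)) {h : Fin m → ℝ}
    (hh : ∀ i ∉ T ∪ S, h i = 0) :
    Qmat A T S lam *ᵥ (T ∪ S).restrict h = (T ∪ S).restrict (L1hess A T lam h) := by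
  rw [Qmat_eq, add_mulVec, ← mulVec_mulVec, colsub_mulVec_restrict A hh, smul_mulVec]
  ext k
  simp only [L1hess, Pi.add_apply, Pi.smul_apply, mulVec_diagonal, smul_eq_mul, restrict_def]
  split_ifs <;> simp only [one_mul, zero_mul, mul_zero] <;> rfl

end Ridge

section Schur

variable {n m : ℕ} (A : Matrix (Fin n) (Fin m) ℝ) {T Δ : Finset (Fin m)} (lam : ℝ)

theorem Qmat_submatrix_union (hTΔ : Disjoint T Δ) :
    (Qmat A T Δ lam).submatrix (Equiv.Finset.union T Δ hTΔ) (Equiv.Finset.union T Δ hTΔ)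
      = fromBlocks ((colsub A T)ᵀ * colsub A T + lam • 1) ((colsub A T)ᵀ * colsub A Δ)
          ((colsub A Δ)ᵀ * colsub A T) ((colsub A Δ)ᵀ * colsub A Δ) := by
  ext (i | i) (j | j) <;>
    simp only [submatrix_apply, Equiv.Finset.union_inl, Equiv.Finset.union_inr, fromBlocks_apply₁₁,
      fromBlocks_apply₁₂, fromBlocks_apply₂₁, fromBlocks_apply₂₂, Qmat, Matrix.add_apply,
      Matrix.smul_apply, mul_apply, transpose_apply, colsub, of_apply, one_apply,
      Subtype.mk.injEq]
  · simp [i.2]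
  · simp [show (i : Fin m) ≠ j from fun h => disjoint_left.mp hTΔ i.2 (h ▸ j.2)]
  all_goals simp [disjoint_right.mp hTΔ i.2]

theorem schur_eq :
    (colsub A Δ)ᵀ * Mmat A T lam * colsub A Δ = (colsub A Δ)ᵀ * colsub A Δ
      - (colsub A Δ)ᵀ * colsub A T * ((colsub A T)ᵀ * colsub A T + lam • 1)⁻¹
        * ((colsub A T)ᵀ * colsub A Δ) := by
  simp only [Mmat, Matrix.mul_sub, Matrix.sub_mul, Matrix.mul_one, Matrix.mul_assoc]

variable {A lam}

theorem isUnit_det_of_isUnit_Qmat (hTΔ : Disjoint T Δ) (hlam : 0 ≤ lam)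
    (hQ : IsUnit (Qmat A T Δ lam)) :
    IsUnit ((colsub A T)ᵀ * colsub A T + lam • 1).det
      ∧ IsUnit ((colsub A Δ)ᵀ * Mmat A T lam * colsub A Δ).det := by
  have hG := ((posSemidef_Qmat A T lam Δ hlam).posDef_iff_isUnit.mpr hQ).submatrix
    (Equiv.Finset.union T Δ hTΔ).injective
  rw [Qmat_submatrix_union] at hG
  have hB : ((colsub A T)ᵀ * colsub A T + lam • 1).PosDef := hG.submatrix Sum.inl_injective
  have := hB.isUnit.invertible
  have hdet := (isUnit_iff_isUnit_det _).mp hG.isUnit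
  rw [det_fromBlocks₁₁, invOf_eq_nonsing_inv, ← schur_eq] at hdet
  exact ⟨(isUnit_iff_isUnit_det _).mp hB.isUnit, isUnit_of_mul_isUnit_right hdet⟩

theorem restrict_eq_of_L1hess (hTΔ : Disjoint T Δ) (hlam : 0 ≤ lam)
    (hQ : IsUnit (Qmat A T Δ lam)) {h : Fin m → ℝ} (hh : ∀ i ∉ T ∪ Δ, h i = 0)
    (hT : ∀ j ∈ T, L1hess A T lam h j = 0) :
    Δ.restrict h = Pmat A T Δ lam *ᵥ Δ.restrict (L1hess A T lam h)
      ∧ T.restrict h = -(((colsub A T)ᵀ * colsub A T + lam • 1)⁻¹ * (colsub A T)ᵀ * colsub A Δ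
          * Pmat A T Δ lam) *ᵥ Δ.restrict (L1hess A T lam h) := by
  set e := Equiv.Finset.union T Δ hTΔ
  obtain ⟨hB, hS⟩ := isUnit_det_of_isUnit_Qmat hTΔ hlam hQ
  have hsplit : ∀ v : Fin m → ℝ, (T ∪ Δ).restrict v ∘ e = Sum.elim (T.restrict v) (Δ.restrict v) :=
    fun v => funext fun x => by cases x <;> rfl
  have hzero : T.restrict (L1hess A T lam h) = 0 := funext fun j => hT j j.2
  have hblocks : fromBlocks ((colsub A T)ᵀ * colsub A T + lam • 1) ((colsub A T)ᵀ * colsub A Δ)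
      ((colsub A Δ)ᵀ * colsub A T) ((colsub A Δ)ᵀ * colsub A Δ) *ᵥ
        Sum.elim (T.restrict h) (Δ.restrict h)
        = Sum.elim (0 : Idx T → ℝ) (Δ.restrict (L1hess A T lam h)) := by
    rw [← hsplit, ← hzero, ← hsplit, ← Qmat_submatrix_union, submatrix_mulVec_equiv,
      Function.comp_assoc, Equiv.self_comp_symm, Function.comp_id,
      Qmat_mulVec_restrict A T lam Δ hh]
  rw [schur_eq] at hS
  obtain ⟨hΔ, hT⟩ := eq_schur_of_fromBlocks_mulVec hB hS hblocks
  rw [← schur_eq] at hΔ hT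
  exact ⟨hΔ, by rw [hT, Pmat, Matrix.mul_assoc _ (colsub A T)ᵀ]⟩

end Schur

section Norms

variable {ι κ : Type*} [Fintype ι] [Fintype κ]

theorem l2_nonneg (v : ι → ℝ) : 0 ≤ l2 v := Real.sqrt_nonneg _

theorem l2_sq (v : ι → ℝ) : l2 v ^ 2 = ∑ i, v i ^ 2 :=
  Real.sq_sqrt (sum_nonneg fun _ _ => sq_nonneg _)

theorem l2_eq_norm (v : ι → ℝ) : l2 v = ‖WithLp.toLp 2 v‖ := by
  rw [EuclideanSpace.norm_eq]
  exact congrArg Real.sqrt (sum_congr rfl fun i _ => by rw [Real.norm_eq_abs, sq_abs])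

theorem l2_le_sqrt_card_mul {γ : ℝ} (hγ : 0 ≤ γ) {v : ι → ℝ} (hv : ∀ i, |v i| ≤ γ) :
    l2 v ≤ √(Fintype.card ι) * γ := by
  rw [← Real.sqrt_sq hγ, ← Real.sqrt_mul (Nat.cast_nonneg _), l2]
  refine Real.sqrt_le_sqrt ?_
  calc ∑ i, v i ^ 2 ≤ ∑ _i : ι, γ ^ 2 :=
        sum_le_sum fun i _ => sq_le_sq' (abs_le.mp (hv i)).1 (abs_le.mp (hv i)).2
    _ = _ := by simp

theorem l2_sq_eq_add_of_disjoint [DecidableEq ι] {T Δ : Finset ι} (hTΔ : Disjoint T Δ)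
    {h : ι → ℝ} (hh : ∀ i ∉ T ∪ Δ, h i = 0) :
    l2 h ^ 2 = l2 (T.restrict h) ^ 2 + l2 (Δ.restrict h) ^ 2 := by
  simp only [l2_sq]
  exact sum_eq_sum_coe_add_of_disjoint hTΔ fun i hi => by simp [hh i hi]

variable [DecidableEq ι]

theorem spec_neg (M : Matrix κ ι ℝ) : spec (-M) = spec M := by
  simp only [spec, map_neg, norm_neg]

theorem l2_mulVec_le (M : Matrix κ ι ℝ) (v : ι → ℝ) : l2 (M *ᵥ v) ≤ spec M * l2 v := by
  rw [l2_eq_norm, l2_eq_norm]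
  exact (LinearMap.toContinuousLinearMap (toEuclideanLin M)).le_opNorm (WithLp.toLp 2 v)

variable {κ' : Type*} [Fintype κ']

theorem sqrt_l2_sq_add_l2_sq_le (M : Matrix κ ι ℝ) (N : Matrix κ' ι ℝ) (v : ι → ℝ) :
    √(l2 (M *ᵥ v) ^ 2 + l2 (N *ᵥ v) ^ 2) ≤ √(spec M ^ 2 + spec N ^ 2) * l2 v := by
  rw [← Real.sqrt_sq (l2_nonneg v), ← Real.sqrt_mul (by positivity)]
  refine Real.sqrt_le_sqrt ?_
  have hM := pow_le_pow_left₀ (l2_nonneg _) (l2_mulVec_le M v) 2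
  have hN := pow_le_pow_left₀ (l2_nonneg _) (l2_mulVec_le N v) 2
  linarith [mul_pow (spec M) (l2 v) 2, mul_pow (spec N) (l2 v) 2]

end Norms

/-- `‖d(Δ) − c(Δ)‖₂ ≤ γ√|Δ|·f₁(Δ)` where `d(Δ)` minimizes `L` and
`c(Δ)` minimizes `L₁`, both over vectors supported on `T ∪ Δ`. -/
theorem stmt5 {n m : ℕ} (A : Matrix (Fin n) (Fin m) ℝ) (T Δ : Finset (Fin m))
    (hTΔ : Disjoint T Δ) (γ lam : ℝ) (hγ : 0 < γ) (hlam : 0 ≤ lam)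
    (y : Fin n → ℝ) (μ : Fin m → ℝ)
    (hQ : IsUnit (Qmat A T Δ lam)) (d c : Fin m → ℝ)
    (hd0 : ∀ i ∉ T ∪ Δ, d i = 0)
    (hdmin : ∀ b : Fin m → ℝ, (∀ i ∉ T ∪ Δ, b i = 0) →
      Lobj A T γ lam y μ d ≤ Lobj A T γ lam y μ b)
    (hc0 : ∀ i ∉ T ∪ Δ, c i = 0)
    (hcmin : ∀ b : Fin m → ℝ, (∀ i ∉ T ∪ Δ, b i = 0) →
      L1obj A T lam y μ c ≤ L1obj A T lam y μ b) :
    l2 (fun i => d i - c i) ≤ γ * Real.sqrt (Δ.card : ℝ) * f1 A T Δ lam := by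
  have hh : ∀ i ∉ T ∪ Δ, (d - c) i = 0 := fun i hi => by simp [hd0 i hi, hc0 i hi]
  have hhess : ∀ j ∈ T ∪ Δ, L1hess A T lam (d - c) j = L1grad A T lam y μ d j := fun j hj => by
    rw [← L1grad_sub, Pi.sub_apply, L1grad_eq_zero_of_isMinOn hc0 hcmin hj, sub_zero]
  have hdgrad := fun j hj => abs_L1grad_le_of_isMinOn hγ.le hd0 hdmin (j := j) hj
  obtain ⟨hΔ, hT⟩ := restrict_eq_of_L1hess hTΔ hlam hQ hh fun j hj => by
    simpa [hhess j (mem_union_left _ hj), hj] using hdgrad j (mem_union_left _ hj)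
  have hz : ∀ j : Δ, |Δ.restrict (L1hess A T lam (d - c)) j| ≤ γ := fun j => by
    simpa [hhess j (mem_union_right _ j.2), disjoint_right.mp hTΔ j.2]
      using hdgrad j (mem_union_right _ j.2)
  calc l2 (d - c) = √(l2 (T.restrict (d - c)) ^ 2 + l2 (Δ.restrict (d - c)) ^ 2) := by
        rw [← l2_sq_eq_add_of_disjoint hTΔ hh, Real.sqrt_sq (l2_nonneg _)]
    _ ≤ f1 A T Δ lam * l2 (Δ.restrict (L1hess A T lam (d - c))) := by
        rw [hT, hΔ, f1, ← spec_neg]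
        exact sqrt_l2_sq_add_l2_sq_le _ _ _
    _ ≤ f1 A T Δ lam * (√(Δ.card : ℝ) * γ) := by
        have hf1 : 0 ≤ f1 A T Δ lam := Real.sqrt_nonneg _
        simpa only [Fintype.card_coe] using
          mul_le_mul_of_nonneg_left (l2_le_sqrt_card_mul hγ.le hz) hf1
    _ = γ * √(Δ.card : ℝ) * f1 A T Δ lam := by ring
end
end

section
/- Let L(b) = γ‖b_{T^c}‖₁ + (1/2)‖y − Ab‖₂² + (λ/2)‖b_T − μ̂_T‖₂². Suppose Q_{T,λ}(Δ) is invertible, ERC_{T,λ}(Δ) = 1 − max_{ω ∉ T∪Δ} ‖P(Δ)A_Δ' M A_ω‖₁ > 0, and γ ≥ ‖A_{(T∪Δ)^c}'(y − A c(Δ))‖_∞ / ERC_{T,λ}(Δ). Then L has a unique global minimizer over all of ℝᵐ, and this minimizer equals d(Δ), the minimizer of L over vectors supported on T∪Δ; in particular the global minimizer is supported on T∪Δ. -/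
open Matrix BigOperators Finset

noncomputable section

/-!
Write `r = A'(y − Ad)`. Testing the minimality of `d` among vectors supported on `T ∪ Δ`
along single coordinates gives `r_T = λ(d − μ̂)_T`, and `|r_i| ≤ γ`, `r_i d_i = γ|d_i|` on `Δ`.
Eliminating the `T`-block of `Q` (whose Schur complement is `A_Δ' M A_Δ = P⁻¹`) and comparing
`d` with `c(Δ)` gives `r_ω = (A'(y − Ac))_ω + ⟨P A_Δ' M A_ω, r_Δ⟩` for `ω ∉ T ∪ Δ`, hence
`|r_ω| ≤ γ ERC + (1 − ERC) γ = γ`. Under these conditions `L(b) − L(d)` is the sum of the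
nonnegative terms `γ|b_i| − r_i b_i` (`i ∉ T`), `½‖A(b − d)‖²` and `λ/2 ‖(b − d)_T‖²`, so `d` is
a global minimizer. For another minimizer `b` all three vanish; then `⟨r, b − d⟩ = 0` and
`(b − d)_Δ = −∑_ω b_ω P A_Δ' M A_ω` give `γ ‖b_{(T∪Δ)ᶜ}‖₁ ≤ (1 − ERC) γ ‖b_{(T∪Δ)ᶜ}‖₁`, so `b`
is supported on `T ∪ Δ`, where the invertibility of `Q` forces `b = d`.
-/

theorem nonneg_of_forall_mul_add_mul_sq_nonneg {w C : ℝ}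
    (h : ∀ s : ℝ, 0 < s → s ≤ 1 → 0 ≤ w * s + C * s ^ 2) : 0 ≤ w := by
  by_contra! hw
  set s := min 1 (-w / (|C| + 1))
  have hs : 0 < s := lt_min one_pos (div_pos (neg_pos.2 hw) (by positivity))
  have hsw : s * (|C| + 1) ≤ -w := (le_div_iff₀ (by positivity)).1 (min_le_right _ _)
  nlinarith [h s hs (min_le_left _ _), mul_le_mul_of_nonneg_right (le_abs_self C) (sq_nonneg s),
    mul_le_mul_of_nonneg_left hsw hs.le]

theorem mul_le_mul_abs_of_abs_le {r γ : ℝ} (hr : |r| ≤ γ) (b : ℝ) : r * b ≤ γ * |b| :=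
  calc r * b ≤ |r| * |b| := by rw [← abs_mul]; exact le_abs_self _
    _ ≤ γ * |b| := mul_le_mul_of_nonneg_right hr (abs_nonneg b)

theorem abs_dotProduct_le_l1_mul {ι : Type*} [Fintype ι] {γ : ℝ} (v s : ι → ℝ)
    (hs : ∀ j, |s j| ≤ γ) : |v ⬝ᵥ s| ≤ l1 v * γ :=
  calc |v ⬝ᵥ s| ≤ ∑ j, |v j| * |s j| := by
        simpa only [dotProduct, abs_mul] using
          Finset.abs_sum_le_sum_abs (fun j => v j * s j) Finset.univ
    _ ≤ ∑ j, |v j| * γ :=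
        Finset.sum_le_sum fun j _ => mul_le_mul_of_nonneg_left (hs j) (abs_nonneg _)
    _ = l1 v * γ := by rw [l1, Finset.sum_mul]

def residualCorr {n m : ℕ} (A : Matrix (Fin n) (Fin m) ℝ) (y : Fin n → ℝ) (b : Fin m → ℝ) :
    Fin m → ℝ :=
  Aᵀ *ᵥ (y - A *ᵥ b)

section Objective

variable {n m : ℕ} (A : Matrix (Fin n) (Fin m) ℝ) (T : Finset (Fin m)) (γ lam : ℝ)
  (y : Fin n → ℝ) (μ : Fin m → ℝ)

theorem residualCorr_dotProduct (d h : Fin m → ℝ) :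
    residualCorr A y d ⬝ᵥ h = (y - A *ᵥ d) ⬝ᵥ (A *ᵥ h) := by
  rw [residualCorr, mulVec_transpose, dotProduct_mulVec]

theorem Lobj_add (d h : Fin m → ℝ) :
    Lobj A T γ lam y μ (d + h) = Lobj A T γ lam y μ d
      + γ * ∑ i ∈ Tᶜ, (|d i + h i| - |d i|) - residualCorr A y d ⬝ᵥ h
      + lam * ∑ i ∈ T, (d i - μ i) * h i
      + (1 / 2) * ∑ k, (A *ᵥ h) k ^ 2 + (lam / 2) * ∑ i ∈ T, h i ^ 2 := by
  have hquad : ∑ k, (y k - (A *ᵥ (d + h)) k) ^ 2 = ∑ k, (y k - (A *ᵥ d) k) ^ 2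
      - 2 * (residualCorr A y d ⬝ᵥ h) + ∑ k, (A *ᵥ h) k ^ 2 := by
    rw [residualCorr_dotProduct, mulVec_add, dotProduct, Finset.mul_sum,
      ← Finset.sum_sub_distrib, ← Finset.sum_add_distrib]
    exact Finset.sum_congr rfl fun k _ => by simp only [Pi.add_apply, Pi.sub_apply]; ring
  have hreg : ∑ i ∈ T, (d i + h i - μ i) ^ 2 = ∑ i ∈ T, (d i - μ i) ^ 2
      + 2 * ∑ i ∈ T, (d i - μ i) * h i + ∑ i ∈ T, h i ^ 2 := by
    rw [Finset.mul_sum, ← Finset.sum_add_distrib, ← Finset.sum_add_distrib]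
    exact Finset.sum_congr rfl fun i _ => by ring
  simp only [Lobj, Pi.add_apply, hquad, hreg, Finset.sum_sub_distrib]
  ring

theorem Lobj_add_single (d : Fin m → ℝ) (i : Fin m) (t : ℝ) :
    Lobj A T γ lam y μ (d + Pi.single i t) = Lobj A T γ lam y μ d
      + (if i ∈ T then lam * (d i - μ i) * t + lam / 2 * t ^ 2 else γ * (|d i + t| - |d i|))
      - residualCorr A y d i * t + (1 / 2) * (∑ k, A k i ^ 2) * t ^ 2 := by
  have hsum : ∀ (s : Finset (Fin m)) (f : Fin m → ℝ → ℝ), (∀ j, f j 0 = 0) →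
      ∑ j ∈ s, f j ((Pi.single i t : Fin m → ℝ) j) = if i ∈ s then f i t else 0 := fun s f hf => by
    simp_rw [Pi.apply_single f hf, Finset.sum_pi_single']
  have hA : ∀ k, (A *ᵥ Pi.single i t) k = A k i * t := fun k => by
    simp [mulVec_single, Matrix.col]
  rw [Lobj_add, hsum Tᶜ (fun j s => |d j + s| - |d j|) (by simp),
    hsum T (fun j s => (d j - μ j) * s) (by simp), hsum T (fun _ s => s ^ 2) (by simp),
    dotProduct_comm, single_dotProduct]
  simp only [hA, mul_pow, ← Finset.sum_mul, Finset.mem_compl]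
  split_ifs <;> ring

end Objective

section Stationarity

variable {n m : ℕ} {A : Matrix (Fin n) (Fin m) ℝ} {T : Finset (Fin m)} {γ lam : ℝ}
  {y : Fin n → ℝ} {μ : Fin m → ℝ} {d : Fin m → ℝ} {i : Fin m}

theorem residualCorr_eq_of_mem (hi : i ∈ T)
    (hmin : ∀ t, Lobj A T γ lam y μ d ≤ Lobj A T γ lam y μ (d + Pi.single i t)) :
    residualCorr A y d i = lam * (d i - μ i) := by
  have key : ∀ t, 0 ≤ (lam * (d i - μ i) - residualCorr A y d i) * t
      + ((1 / 2) * ∑ k, A k i ^ 2 + lam / 2) * t ^ 2 := fun t => by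
    have := hmin t
    rw [Lobj_add_single, if_pos hi] at this
    linarith
  have h₁ := nonneg_of_forall_mul_add_mul_sq_nonneg fun s _ _ => key s
  have h₂ := nonneg_of_forall_mul_add_mul_sq_nonneg (w := -_) fun s _ _ => by
    simpa [neg_mul, mul_neg] using key (-s)
  linarith

theorem abs_residualCorr_le_of_notMem (hγ : 0 ≤ γ) (hi : i ∉ T)
    (hmin : ∀ t, Lobj A T γ lam y μ d ≤ Lobj A T γ lam y μ (d + Pi.single i t)) :
    |residualCorr A y d i| ≤ γ := by
  have key : ∀ t, 0 ≤ γ * |t| - residualCorr A y d i * t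
      + ((1 / 2) * ∑ k, A k i ^ 2) * t ^ 2 := fun t => by
    have h := hmin t
    rw [Lobj_add_single, if_neg hi] at h
    have : |d i + t| - |d i| ≤ |t| := by linarith [abs_add_le (d i) t]
    nlinarith [mul_le_mul_of_nonneg_left this hγ]
  set r := residualCorr A y d i
  have h₁ := nonneg_of_forall_mul_add_mul_sq_nonneg (w := γ - r) fun s hs _ => by
    simpa [abs_of_pos hs, sub_mul] using key s
  have h₂ := nonneg_of_forall_mul_add_mul_sq_nonneg (w := γ + r) fun s hs _ => by
    simpa [abs_of_pos hs, add_mul] using key (-s)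
  exact abs_le.2 ⟨by linarith, by linarith⟩

theorem residualCorr_mul_eq_of_notMem (hγ : 0 ≤ γ) (hi : i ∉ T)
    (hmin : ∀ t, Lobj A T γ lam y μ d ≤ Lobj A T γ lam y μ (d + Pi.single i t)) :
    residualCorr A y d i * d i = γ * |d i| := by
  set r := residualCorr A y d i
  refine le_antisymm (mul_le_mul_abs_of_abs_le (abs_residualCorr_le_of_notMem hγ hi hmin) _) ?_
  -- shrinking `d i` towards zero by the factor `1 - s`
  have key := nonneg_of_forall_mul_add_mul_sq_nonneg (w := r * d i - γ * |d i|)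
    (C := (1 / 2) * (∑ k, A k i ^ 2) * d i ^ 2) fun s hs hs1 => by
      have := hmin (-(s * d i))
      rw [Lobj_add_single, if_neg hi,
        show d i + -(s * d i) = (1 - s) * d i by ring, abs_mul, abs_of_nonneg (by linarith)]
        at this
      linarith
  linarith

theorem Lobj_eq_of_stationary
    (hT : ∀ i ∈ T, residualCorr A y d i = lam * (d i - μ i))
    (hTc : ∀ i ∉ T, residualCorr A y d i * d i = γ * |d i|) (b : Fin m → ℝ) :
    Lobj A T γ lam y μ b = Lobj A T γ lam y μ d
      + ∑ i ∈ Tᶜ, (γ * |b i| - residualCorr A y d i * b i)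
      + (1 / 2) * ∑ k, (A *ᵥ (b - d)) k ^ 2 + (lam / 2) * ∑ i ∈ T, (b i - d i) ^ 2 := by
  have h := Lobj_add A T γ lam y μ d (b - d)
  rw [add_sub_cancel] at h
  have hT' : ∑ i ∈ T, residualCorr A y d i * (b - d) i
      = lam * ∑ i ∈ T, (d i - μ i) * (b - d) i := by
    rw [Finset.mul_sum]
    exact Finset.sum_congr rfl fun i hi => by rw [hT i hi]; ring
  have hTc' : γ * ∑ i ∈ Tᶜ, (|d i + (b - d) i| - |d i|)
      - ∑ i ∈ Tᶜ, residualCorr A y d i * (b - d) i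
      = ∑ i ∈ Tᶜ, (γ * |b i| - residualCorr A y d i * b i) := by
    rw [Finset.mul_sum, ← Finset.sum_sub_distrib]
    refine Finset.sum_congr rfl fun i hi => ?_
    rw [Pi.sub_apply, add_sub_cancel]
    linear_combination hTc i (Finset.mem_compl.1 hi)
  rw [h, dotProduct, ← Finset.sum_add_sum_compl T, ← hT', ← hTc']
  simp only [Pi.sub_apply]
  ring

variable (hlam : 0 ≤ lam) (hT : ∀ i ∈ T, residualCorr A y d i = lam * (d i - μ i))
  (habs : ∀ i ∉ T, |residualCorr A y d i| ≤ γ)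
  (hTc : ∀ i ∉ T, residualCorr A y d i * d i = γ * |d i|)
include hlam hT habs hTc

theorem Lobj_le_of_stationary (b : Fin m → ℝ) : Lobj A T γ lam y μ d ≤ Lobj A T γ lam y μ b := by
  rw [Lobj_eq_of_stationary hT hTc b]
  have h₁ : 0 ≤ ∑ i ∈ Tᶜ, (γ * |b i| - residualCorr A y d i * b i) :=
    Finset.sum_nonneg fun i hi =>
      sub_nonneg.2 (mul_le_mul_abs_of_abs_le (habs i (Finset.mem_compl.1 hi)) _)
  have h₂ : 0 ≤ ∑ k, (A *ᵥ (b - d)) k ^ 2 := Finset.sum_nonneg fun _ _ => sq_nonneg _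
  have h₃ : 0 ≤ ∑ i ∈ T, (b i - d i) ^ 2 := Finset.sum_nonneg fun _ _ => sq_nonneg _
  nlinarith

theorem eq_of_Lobj_eq_of_stationary {b : Fin m → ℝ}
    (hb : Lobj A T γ lam y μ b = Lobj A T γ lam y μ d) :
    A *ᵥ b = A *ᵥ d ∧ (∀ i ∈ T, lam * (b i - d i) = 0) ∧
      ∀ i ∉ T, residualCorr A y d i * b i = γ * |b i| := by
  have h := Lobj_eq_of_stationary hT hTc b
  have hgap : ∀ i ∈ Tᶜ, 0 ≤ γ * |b i| - residualCorr A y d i * b i := fun i hi =>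
    sub_nonneg.2 (mul_le_mul_abs_of_abs_le (habs i (Finset.mem_compl.1 hi)) _)
  have h₁ := Finset.sum_nonneg hgap
  have h₂ : 0 ≤ ∑ k, (A *ᵥ (b - d)) k ^ 2 := Finset.sum_nonneg fun _ _ => sq_nonneg _
  have h₃ : 0 ≤ ∑ i ∈ T, (b i - d i) ^ 2 := Finset.sum_nonneg fun _ _ => sq_nonneg _
  refine ⟨?_, fun i hi => ?_, fun i hi => ?_⟩
  · have h₂' : ∑ k, (A *ᵥ (b - d)) k ^ 2 = 0 := by nlinarith
    rw [← sub_eq_zero, ← mulVec_sub]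
    funext k
    simpa using (Finset.sum_eq_zero_iff_of_nonneg fun _ _ => sq_nonneg _).1 h₂' k
  · have h₃' : lam * ∑ i ∈ T, (b i - d i) ^ 2 = 0 := by nlinarith
    rcases mul_eq_zero.1 h₃' with hl | hs
    · rw [hl, zero_mul]
    · have := (Finset.sum_eq_zero_iff_of_nonneg fun _ _ => sq_nonneg _).1 hs i hi
      rw [pow_eq_zero_iff two_ne_zero] at this
      rw [this, mul_zero]
  · have h₁' : ∑ i ∈ Tᶜ, (γ * |b i| - residualCorr A y d i * b i) = 0 := by nlinarith
    linarith [(Finset.sum_eq_zero_iff_of_nonneg hgap).1 h₁' i (Finset.mem_compl.2 hi)]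

end Stationarity

def regGram {n m : ℕ} (A : Matrix (Fin n) (Fin m) ℝ) (T : Finset (Fin m)) (lam : ℝ) :
    Matrix (Idx T) (Idx T) ℝ :=
  (colsub A T)ᵀ * colsub A T + lam • 1

def schurCompl {n m : ℕ} (A : Matrix (Fin n) (Fin m) ℝ) (T Δ : Finset (Fin m)) (lam : ℝ) :
    Matrix (Idx Δ) (Idx Δ) ℝ :=
  (colsub A Δ)ᵀ * Mmat A T lam * colsub A Δ

def ercMat {n m : ℕ} (A : Matrix (Fin n) (Fin m) ℝ) (T Δ : Finset (Fin m)) (lam : ℝ) :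
    Matrix (Idx Δ) (Fin n) ℝ :=
  Pmat A T Δ lam * (colsub A Δ)ᵀ * Mmat A T lam

def extendZero {m : ℕ} (S : Finset (Fin m)) (u : Idx S → ℝ) : Fin m → ℝ :=
  fun i => if h : i ∈ S then u ⟨i, h⟩ else 0

section Columns

variable {n m : ℕ} (A : Matrix (Fin n) (Fin m) ℝ)

theorem extendZero_eq_zero {S : Finset (Fin m)} (u : Idx S → ℝ) {i : Fin m} (hi : i ∉ S) :
    extendZero S u i = 0 :=
  dif_neg hi

theorem restrict_extendZero (S : Finset (Fin m)) (u : Idx S → ℝ) :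
    S.restrict (extendZero S u) = u :=
  funext fun j => dif_pos j.2

theorem restrict_extendZero_of_disjoint {S S' : Finset (Fin m)} (h : Disjoint S S')
    (u : Idx S → ℝ) : S'.restrict (extendZero S u) = 0 :=
  funext fun j => dif_neg (Finset.disjoint_right.1 h j.2)

theorem restrict_add (S : Finset (Fin m)) (f g : Fin m → ℝ) :
    S.restrict (f + g) = S.restrict f + S.restrict g :=
  rfl

theorem transpose_colsub_mulVec (S : Finset (Fin m)) (z : Fin n → ℝ) :
    (colsub A S)ᵀ *ᵥ z = S.restrict (Aᵀ *ᵥ z) :=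
  rfl

theorem mulVec_eq_colsub_mulVec_add_sum (S : Finset (Fin m)) (x : Fin m → ℝ) :
    A *ᵥ x = colsub A S *ᵥ S.restrict x + ∑ ω ∈ Sᶜ, x ω • fun k => A k ω := by
  funext k
  simp only [mulVec, dotProduct, colsub, of_apply, Finset.restrict, Pi.add_apply,
    Finset.sum_apply, Pi.smul_apply, smul_eq_mul]
  rw [Finset.sum_coe_sort S fun j => A k j * x j, ← Finset.sum_add_sum_compl S]
  simp only [mul_comm]

theorem mulVec_eq_colsub_mulVec {S : Finset (Fin m)} {x : Fin m → ℝ} (hx : ∀ i ∉ S, x i = 0) :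
    A *ᵥ x = colsub A S *ᵥ S.restrict x := by
  rw [mulVec_eq_colsub_mulVec_add_sum A S, Finset.sum_eq_zero fun ω hω => by
    rw [hx ω (Finset.mem_compl.1 hω), zero_smul], add_zero]

theorem mulVec_extendZero (S : Finset (Fin m)) (u : Idx S → ℝ) :
    A *ᵥ extendZero S u = colsub A S *ᵥ u := by
  rw [mulVec_eq_colsub_mulVec A fun i hi => extendZero_eq_zero u hi, restrict_extendZero]

theorem colsub_union_mulVec {T Δ : Finset (Fin m)} (hTΔ : Disjoint T Δ) (x : Fin m → ℝ) :
    colsub A (T ∪ Δ) *ᵥ (T ∪ Δ).restrict x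
      = colsub A T *ᵥ T.restrict x + colsub A Δ *ᵥ Δ.restrict x := by
  funext k
  simp only [mulVec, dotProduct, colsub, of_apply, Finset.restrict, Pi.add_apply]
  rw [Finset.sum_coe_sort (T ∪ Δ) fun j => A k j * x j, Finset.sum_union hTΔ,
    Finset.sum_coe_sort T fun j => A k j * x j, Finset.sum_coe_sort Δ fun j => A k j * x j]

end Columns

section Blocks

variable {n m : ℕ} {A : Matrix (Fin n) (Fin m) ℝ} {T Δ : Finset (Fin m)} {lam : ℝ}

theorem Mmat_eq : Mmat A T lam = 1 - colsub A T * (regGram A T lam)⁻¹ * (colsub A T)ᵀ :=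
  rfl

theorem Qmat_mulVec_restrict_s8 {x : Fin m → ℝ} (hx : ∀ i ∉ T ∪ Δ, x i = 0) :
    Qmat A T Δ lam *ᵥ (T ∪ Δ).restrict x =
      fun j : Idx (T ∪ Δ) => (Aᵀ *ᵥ (A *ᵥ x)) j + if (j : Fin m) ∈ T then lam * x j else 0 := by
  funext j
  rw [Qmat, add_mulVec, ← mulVec_mulVec, ← mulVec_eq_colsub_mulVec A hx,
    transpose_colsub_mulVec, Pi.add_apply, smul_mulVec]
  congr 1
  by_cases hj : (j : Fin m) ∈ T <;> simp [mulVec, dotProduct, hj, ite_and]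

theorem eq_zero_of_normal_eq (hQ : IsUnit (Qmat A T Δ lam)) {x : Fin m → ℝ}
    (hx : ∀ i ∉ T ∪ Δ, x i = 0) (hT : ∀ j ∈ T, (Aᵀ *ᵥ (A *ᵥ x)) j + lam * x j = 0)
    (hΔ : ∀ j ∈ Δ, (Aᵀ *ᵥ (A *ᵥ x)) j = 0) : x = 0 := by
  have hQx : Qmat A T Δ lam *ᵥ (T ∪ Δ).restrict x = Qmat A T Δ lam *ᵥ 0 := by
    rw [Qmat_mulVec_restrict_s8 hx, mulVec_zero]
    funext j
    by_cases hj : (j : Fin m) ∈ T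
    · simpa [hj] using hT j hj
    · simpa [hj] using hΔ j ((Finset.mem_union.1 j.2).resolve_left hj)
  have h0 := mulVec_injective_iff_isUnit.2 hQ hQx
  funext i
  by_cases hi : i ∈ T ∪ Δ
  · exact congrFun h0 ⟨i, hi⟩
  · exact hx i hi

theorem dotProduct_regGram_mulVec (v : Idx T → ℝ) :
    v ⬝ᵥ (regGram A T lam *ᵥ v) = (colsub A T *ᵥ v) ⬝ᵥ (colsub A T *ᵥ v) + lam * (v ⬝ᵥ v) := by
  rw [regGram, add_mulVec, dotProduct_add, ← mulVec_mulVec, dotProduct_mulVec, vecMul_transpose,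
    smul_mulVec, one_mulVec, dotProduct_smul, smul_eq_mul]

theorem isUnit_regGram_det (hlam : 0 ≤ lam) (hQ : IsUnit (Qmat A T Δ lam)) :
    IsUnit (regGram A T lam).det := by
  refine isUnit_iff_ne_zero.2 fun h0 => ?_
  obtain ⟨v, hv, hGv⟩ := exists_mulVec_eq_zero_iff.2 h0
  have hquad := dotProduct_regGram_mulVec (A := A) (lam := lam) v
  rw [hGv, dotProduct_zero] at hquad
  have h₁ : 0 ≤ (colsub A T *ᵥ v) ⬝ᵥ (colsub A T *ᵥ v) :=
    Finset.sum_nonneg fun _ _ => mul_self_nonneg _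
  have h₂ : 0 ≤ v ⬝ᵥ v := Finset.sum_nonneg fun _ _ => mul_self_nonneg _
  have hAv : colsub A T *ᵥ v = 0 := dotProduct_self_eq_zero.1 (by nlinarith)
  have hlv : lam • v = 0 := by
    rcases mul_eq_zero.1 (show lam * (v ⬝ᵥ v) = 0 by nlinarith) with hl | hvv
    · rw [hl, zero_smul]
    · rw [dotProduct_self_eq_zero.1 hvv, smul_zero]
  have hx : extendZero T v = 0 := by
    refine eq_zero_of_normal_eq hQ (fun i hi => extendZero_eq_zero v fun hT => hi
      (Finset.mem_union_left Δ hT)) (fun j hj => ?_) fun j _ => ?_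
    · simpa [mulVec_extendZero, hAv, extendZero, hj] using congrFun hlv ⟨j, hj⟩
    · simp [mulVec_extendZero, hAv]
  exact hv (by rw [← restrict_extendZero T v, hx]; rfl)

theorem Pmat_eq : Pmat A T Δ lam = (schurCompl A T Δ lam)⁻¹ :=
  rfl

theorem regGram_transpose : (regGram A T lam)ᵀ = regGram A T lam := by
  simp [regGram, transpose_add, transpose_mul, transpose_smul, transpose_one]

theorem Mmat_transpose : (Mmat A T lam)ᵀ = Mmat A T lam := by
  rw [Mmat_eq, transpose_sub, transpose_one, transpose_mul, transpose_mul, transpose_transpose,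
    transpose_nonsing_inv, regGram_transpose, Matrix.mul_assoc]

theorem Pmat_transpose : (Pmat A T Δ lam)ᵀ = Pmat A T Δ lam := by
  rw [Pmat, transpose_nonsing_inv, transpose_mul, transpose_mul, transpose_transpose,
    Mmat_transpose, Matrix.mul_assoc]

theorem ercMat_eq_transpose :
    ercMat A T Δ lam = (Mmat A T lam * colsub A Δ * Pmat A T Δ lam)ᵀ := by
  rw [transpose_mul, transpose_mul, Pmat_transpose, Mmat_transpose, ercMat, Matrix.mul_assoc]

theorem transpose_colsub_mul_colsub : (colsub A T)ᵀ * colsub A T = regGram A T lam - lam • 1 := by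
  rw [regGram, add_sub_cancel_right]

theorem Mmat_mul_colsub (hG : IsUnit (regGram A T lam).det) :
    Mmat A T lam * colsub A T = lam • (colsub A T * (regGram A T lam)⁻¹) := by
  rw [Mmat_eq, Matrix.sub_mul, Matrix.one_mul, Matrix.mul_assoc, Matrix.mul_assoc,
    transpose_colsub_mul_colsub, Matrix.mul_sub, nonsing_inv_mul _ hG, Matrix.mul_smul,
    Matrix.mul_one, Matrix.mul_sub, Matrix.mul_one, Matrix.mul_smul, sub_sub_cancel]

theorem transpose_colsub_mul_Mmat (hG : IsUnit (regGram A T lam).det) :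
    (colsub A T)ᵀ * Mmat A T lam = lam • ((regGram A T lam)⁻¹ * (colsub A T)ᵀ) := by
  rw [Mmat_eq, Matrix.mul_sub, Matrix.mul_one, ← Matrix.mul_assoc, ← Matrix.mul_assoc,
    transpose_colsub_mul_colsub, Matrix.sub_mul, mul_nonsing_inv _ hG, Matrix.smul_mul,
    Matrix.one_mul, Matrix.sub_mul, Matrix.one_mul, Matrix.smul_mul, sub_sub_cancel]

theorem colsub_mulVec_add_eq_Mmat_mulVec (w : Idx Δ → ℝ) :
    colsub A T *ᵥ -((regGram A T lam)⁻¹ *ᵥ ((colsub A T)ᵀ *ᵥ (colsub A Δ *ᵥ w)))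
      + colsub A Δ *ᵥ w = Mmat A T lam *ᵥ (colsub A Δ *ᵥ w) := by
  rw [Mmat_eq, sub_mulVec, one_mulVec, mulVec_neg, mulVec_mulVec, mulVec_mulVec,
    ← mulVec_mulVec]
  abel

variable (hTΔ : Disjoint T Δ)
include hTΔ

theorem mulVec_eq_Mmat_mulVec_of_normal_eq (hG : IsUnit (regGram A T lam).det)
    {x : Fin m → ℝ} (hx : ∀ i ∉ T ∪ Δ, x i = 0)
    (hT : ∀ j ∈ T, (Aᵀ *ᵥ (A *ᵥ x)) j + lam * x j = 0) :
    A *ᵥ x = Mmat A T lam *ᵥ (colsub A Δ *ᵥ Δ.restrict x) := by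
  have hAx : A *ᵥ x = colsub A T *ᵥ T.restrict x + colsub A Δ *ᵥ Δ.restrict x := by
    rw [mulVec_eq_colsub_mulVec A hx, colsub_union_mulVec A hTΔ]
  have hGx : regGram A T lam *ᵥ T.restrict x
      = -((colsub A T)ᵀ *ᵥ (colsub A Δ *ᵥ Δ.restrict x)) := by
    rw [eq_neg_iff_add_eq_zero, regGram, add_mulVec, smul_mulVec, one_mulVec, ← mulVec_mulVec,
      add_right_comm, ← mulVec_add, ← hAx]
    exact funext fun j => hT j j.2
  have hxT : T.restrict x
      = -((regGram A T lam)⁻¹ *ᵥ ((colsub A T)ᵀ *ᵥ (colsub A Δ *ᵥ Δ.restrict x))) := by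
    rw [← mulVec_neg, ← hGx, mulVec_mulVec, nonsing_inv_mul _ hG, one_mulVec]
  rw [hAx, hxT, colsub_mulVec_add_eq_Mmat_mulVec]

variable (hlam : 0 ≤ lam) (hQ : IsUnit (Qmat A T Δ lam))
include hlam hQ

theorem isUnit_schurCompl_det : IsUnit (schurCompl A T Δ lam).det := by
  have hG := isUnit_regGram_det hlam hQ
  refine isUnit_iff_ne_zero.2 fun h0 => ?_
  obtain ⟨w, hw, hWw⟩ := exists_mulVec_eq_zero_iff.2 h0
  set u := -((regGram A T lam)⁻¹ *ᵥ ((colsub A T)ᵀ *ᵥ (colsub A Δ *ᵥ w)))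
  set x := extendZero T u + extendZero Δ w
  have hAx : A *ᵥ x = Mmat A T lam *ᵥ (colsub A Δ *ᵥ w) := by
    rw [mulVec_add, mulVec_extendZero, mulVec_extendZero, colsub_mulVec_add_eq_Mmat_mulVec]
  have hxT : T.restrict x = u := by
    simp only [x, restrict_add, restrict_extendZero,
      restrict_extendZero_of_disjoint hTΔ.symm, add_zero]
  have hx0 : x = 0 := by
    refine eq_zero_of_normal_eq hQ (fun i hi => ?_) (fun j hj => ?_) fun j hj => ?_
    · rw [Finset.mem_union, not_or] at hi
      simp [x, extendZero_eq_zero _ hi.1, extendZero_eq_zero _ hi.2]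
    · have hTx : T.restrict (Aᵀ *ᵥ (A *ᵥ x)) + lam • T.restrict x = 0 := by
        rw [← transpose_colsub_mulVec, hAx, mulVec_mulVec, transpose_colsub_mul_Mmat hG,
          smul_mulVec, ← mulVec_mulVec, hxT, smul_neg, add_neg_cancel]
      simpa using congrFun hTx ⟨j, hj⟩
    · have : (schurCompl A T Δ lam *ᵥ w) ⟨j, hj⟩ = (Aᵀ *ᵥ (A *ᵥ x)) j := by
        rw [hAx, schurCompl, ← mulVec_mulVec, ← mulVec_mulVec]
        rfl
      rw [← this, hWw, Pi.zero_apply]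
  have hΔx := congrArg Δ.restrict hx0
  simp only [x, restrict_add, restrict_extendZero, restrict_extendZero_of_disjoint hTΔ,
    zero_add] at hΔx
  exact hw hΔx

theorem mulVec_eq_of_normal_eq {x : Fin m → ℝ} (hx : ∀ i ∉ T ∪ Δ, x i = 0)
    (hT : ∀ j ∈ T, (Aᵀ *ᵥ (A *ᵥ x)) j + lam * x j = 0) :
    A *ᵥ x = (Mmat A T lam * colsub A Δ * Pmat A T Δ lam) *ᵥ Δ.restrict (Aᵀ *ᵥ (A *ᵥ x)) := by
  have hAx := mulVec_eq_Mmat_mulVec_of_normal_eq hTΔ (isUnit_regGram_det hlam hQ) hx hT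
  have hWx : Δ.restrict (Aᵀ *ᵥ (A *ᵥ x)) = schurCompl A T Δ lam *ᵥ Δ.restrict x := by
    rw [← transpose_colsub_mulVec, hAx, schurCompl, ← mulVec_mulVec, ← mulVec_mulVec]
  rw [hWx, ← mulVec_mulVec, mulVec_mulVec _ (Pmat A T Δ lam), Pmat_eq,
    nonsing_inv_mul _ (isUnit_schurCompl_det hTΔ hlam hQ), one_mulVec, ← mulVec_mulVec]
  exact hAx

theorem restrict_eq_neg_sum_of_mulVec_eq_zero {x : Fin m → ℝ} (hAx : A *ᵥ x = 0)
    (hT : ∀ i ∈ T, lam * x i = 0) :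
    Δ.restrict x = -∑ ω ∈ (T ∪ Δ)ᶜ, x ω • (ercMat A T Δ lam *ᵥ fun k => A k ω) := by
  have hKΔ : ercMat A T Δ lam * colsub A Δ = 1 := by
    rw [ercMat, Matrix.mul_assoc, Matrix.mul_assoc, ← Matrix.mul_assoc _ _ (colsub A Δ), Pmat_eq,
      ← schurCompl, nonsing_inv_mul _ (isUnit_schurCompl_det hTΔ hlam hQ)]
  have hKT : ercMat A T Δ lam *ᵥ (colsub A T *ᵥ T.restrict x) = 0 := by
    have hlx : lam • T.restrict x = 0 := funext fun j => hT j j.2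
    rw [mulVec_mulVec, ercMat, Matrix.mul_assoc, Mmat_mul_colsub (isUnit_regGram_det hlam hQ),
      Matrix.mul_smul, smul_mulVec, ← mulVec_smul, hlx, mulVec_zero]
  have h := congrArg (ercMat A T Δ lam *ᵥ ·) hAx
  simp only [mulVec_eq_colsub_mulVec_add_sum A (T ∪ Δ), colsub_union_mulVec A hTΔ, mulVec_add,
    hKT, mulVec_mulVec, hKΔ, one_mulVec, zero_add, mulVec_sum, mulVec_smul, mulVec_zero] at h
  exact eq_neg_of_add_eq_zero_left h

end Blocks

section Residuals

variable {n m : ℕ} {A : Matrix (Fin n) (Fin m) ℝ} {T Δ : Finset (Fin m)} {γ lam : ℝ}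
  {y : Fin n → ℝ} {μ : Fin m → ℝ}

theorem residualCorr_cvec (hQ : IsUnit (Qmat A T Δ lam)) {j : Fin m} (hj : j ∈ T ∪ Δ) :
    residualCorr A y (cvec A T Δ lam y μ) j =
      if j ∈ T then lam * (cvec A T Δ lam y μ j - μ j) else 0 := by
  have hc : (T ∪ Δ).restrict (cvec A T Δ lam y μ) = (Qmat A T Δ lam)⁻¹ *ᵥ
      fun i => (∑ k, A k i.1 * y k) + if (i : Fin m) ∈ T then lam * μ i.1 else 0 :=
    funext fun i => dif_pos i.2
  have h := congrFun (Qmat_mulVec_restrict_s8 (A := A) (lam := lam) (x := cvec A T Δ lam y μ)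
    fun i hi => dif_neg hi) ⟨j, hj⟩
  rw [hc, mulVec_mulVec, mul_nonsing_inv _ ((isUnit_iff_isUnit_det _).1 hQ), one_mulVec] at h
  have hy : (Aᵀ *ᵥ y) j = ∑ k, A k j * y k := rfl
  simp only [residualCorr, mulVec_sub, Pi.sub_apply, hy]
  split_ifs at h ⊢ <;> linarith

theorem abs_ercMat_dotProduct_le (hγ : 0 ≤ γ) {ω : Fin m} (hω : ω ∉ T ∪ Δ) {s : Fin m → ℝ}
    (hs : ∀ j ∈ Δ, |s j| ≤ γ) :
    |(ercMat A T Δ lam *ᵥ fun k => A k ω) ⬝ᵥ Δ.restrict s| ≤ (1 - ERC A T Δ lam) * γ := by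
  have hl1 : l1 (ercMat A T Δ lam *ᵥ fun k => A k ω) ≤ 1 - ERC A T Δ lam := by
    rw [ERC, sub_sub_cancel]
    exact le_ciSup (f := fun ω' : Idx ((T ∪ Δ)ᶜ) => l1 (ercMat A T Δ lam *ᵥ fun k => A k ω'))
      (Finite.bddAbove_range _) ⟨ω, Finset.mem_compl.2 hω⟩
  exact (abs_dotProduct_le_l1_mul _ (Δ.restrict s) fun j => hs j j.2).trans
    (mul_le_mul_of_nonneg_right hl1 hγ)

theorem abs_residualCorr_cvec_le_gammaNum {ω : Fin m} (hω : ω ∉ T ∪ Δ) :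
    |residualCorr A y (cvec A T Δ lam y μ) ω| ≤ gammaNum A T Δ lam y μ :=
  le_ciSup (f := fun j : Idx ((T ∪ Δ)ᶜ) => |residualCorr A y (cvec A T Δ lam y μ) j|)
    (Finite.bddAbove_range _) ⟨ω, Finset.mem_compl.2 hω⟩

variable {d : Fin m → ℝ} (hTΔ : Disjoint T Δ) (hlam : 0 ≤ lam) (hQ : IsUnit (Qmat A T Δ lam))
  (hd : ∀ i ∉ T ∪ Δ, d i = 0) (hT : ∀ i ∈ T, residualCorr A y d i = lam * (d i - μ i))
include hTΔ hlam hQ hd hT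

theorem residualCorr_eq_add_dotProduct {c : Fin m → ℝ} (hc : ∀ i ∉ T ∪ Δ, c i = 0)
    (hcT : ∀ j ∈ T, residualCorr A y c j = lam * (c j - μ j))
    (hcΔ : ∀ j ∈ Δ, residualCorr A y c j = 0) (ω : Fin m) :
    residualCorr A y d ω = residualCorr A y c ω
      + (ercMat A T Δ lam *ᵥ fun k => A k ω) ⬝ᵥ Δ.restrict (residualCorr A y d) := by
  have hx : ∀ i ∉ T ∪ Δ, (c - d) i = 0 := fun i hi => by simp [hc i hi, hd i hi]
  have hAAx : Aᵀ *ᵥ (A *ᵥ (c - d)) = residualCorr A y d - residualCorr A y c := by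
    simp only [residualCorr, mulVec_sub]
    abel
  have hTx : ∀ j ∈ T, (Aᵀ *ᵥ (A *ᵥ (c - d))) j + lam * (c - d) j = 0 := fun j hj => by
    rw [hAAx, Pi.sub_apply, hT j hj, hcT j hj, Pi.sub_apply]
    ring
  have hΔx : Δ.restrict (Aᵀ *ᵥ (A *ᵥ (c - d))) = Δ.restrict (residualCorr A y d) :=
    funext fun j => by simp [hAAx, hcΔ j j.2]
  have hAx := mulVec_eq_of_normal_eq hTΔ hlam hQ hx hTx
  rw [hΔx] at hAx
  have h : residualCorr A y d ω - residualCorr A y c ω = (fun k => A k ω) ⬝ᵥ (A *ᵥ (c - d)) := by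
    rw [← Pi.sub_apply, ← hAAx]
    rfl
  rw [hAx, dotProduct_mulVec, ← mulVec_transpose, ← ercMat_eq_transpose] at h
  linarith

theorem abs_residualCorr_le_of_notMem_union (hγ : 0 ≤ γ) (hERC : 0 < ERC A T Δ lam)
    (hγge : γ ≥ gammaNum A T Δ lam y μ / ERC A T Δ lam)
    (hΔ : ∀ i ∈ Δ, |residualCorr A y d i| ≤ γ) {ω : Fin m} (hω : ω ∉ T ∪ Δ) :
    |residualCorr A y d ω| ≤ γ := by
  have hnum : gammaNum A T Δ lam y μ ≤ γ * ERC A T Δ lam := (div_le_iff₀ hERC).1 hγge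
  have hcT : ∀ j ∈ T, residualCorr A y (cvec A T Δ lam y μ) j
      = lam * (cvec A T Δ lam y μ j - μ j) := fun j hj => by
    rw [residualCorr_cvec hQ (Finset.mem_union_left Δ hj), if_pos hj]
  have hcΔ : ∀ j ∈ Δ, residualCorr A y (cvec A T Δ lam y μ) j = 0 := fun j hj => by
    rw [residualCorr_cvec hQ (Finset.mem_union_right T hj), if_neg (Finset.disjoint_right.1 hTΔ hj)]
  rw [residualCorr_eq_add_dotProduct hTΔ hlam hQ hd hT (c := cvec A T Δ lam y μ)
    (fun i hi => dif_neg hi) hcT hcΔ ω]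
  linarith [abs_add_le (residualCorr A y (cvec A T Δ lam y μ) ω)
      ((ercMat A T Δ lam *ᵥ fun k => A k ω) ⬝ᵥ Δ.restrict (residualCorr A y d)),
    abs_residualCorr_cvec_le_gammaNum (A := A) (lam := lam) (y := y) (μ := μ) hω,
    abs_ercMat_dotProduct_le (A := A) (lam := lam) hγ hω hΔ]

theorem eq_zero_of_notMem_union (hγ : 0 < γ) (hERC : 0 < ERC A T Δ lam)
    (hΔ : ∀ i ∈ Δ, |residualCorr A y d i| ≤ γ) {b : Fin m → ℝ} (hAb : A *ᵥ b = A *ᵥ d)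
    (hbT : ∀ i ∈ T, lam * (b i - d i) = 0)
    (hbTc : ∀ i ∉ T, residualCorr A y d i * b i = γ * |b i|) :
    ∀ ω ∉ T ∪ Δ, b ω = 0 := by
  set r := residualCorr A y d
  set v : Fin m → Idx Δ → ℝ := fun ω => ercMat A T Δ lam *ᵥ fun k => A k ω
  have hAh : A *ᵥ (b - d) = 0 := by rw [mulVec_sub, hAb, sub_self]
  have hsplit : r ⬝ᵥ (b - d) = ∑ i ∈ T, r i * (b - d) i + Δ.restrict r ⬝ᵥ Δ.restrict (b - d)
      + ∑ ω ∈ (T ∪ Δ)ᶜ, r ω * (b - d) ω := by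
    rw [dotProduct, dotProduct, ← Finset.sum_add_sum_compl (T ∪ Δ), Finset.sum_union hTΔ,
      ← Finset.sum_coe_sort Δ]
    rfl
  have hTpart : ∑ i ∈ T, r i * (b - d) i = 0 := Finset.sum_eq_zero fun i hi => by
    rw [hT i hi, Pi.sub_apply]
    linear_combination (d i - μ i) * hbT i hi
  have hΔpart : Δ.restrict r ⬝ᵥ Δ.restrict (b - d)
      = -∑ ω ∈ (T ∪ Δ)ᶜ, (v ω ⬝ᵥ Δ.restrict r) * b ω := by
    rw [restrict_eq_neg_sum_of_mulVec_eq_zero hTΔ hlam hQ hAh hbT, dotProduct_neg, dotProduct_sum]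
    refine congrArg _ (Finset.sum_congr rfl fun ω hω => ?_)
    rw [dotProduct_smul, smul_eq_mul, dotProduct_comm, Pi.sub_apply, hd ω (Finset.mem_compl.1 hω),
      sub_zero, mul_comm]
  have hoff : ∑ ω ∈ (T ∪ Δ)ᶜ, r ω * (b - d) ω = γ * ∑ ω ∈ (T ∪ Δ)ᶜ, |b ω| := by
    rw [Finset.mul_sum]
    refine Finset.sum_congr rfl fun ω hω => ?_
    have hω' := Finset.mem_compl.1 hω
    rw [Pi.sub_apply, hd ω hω', sub_zero, hbTc ω fun h => hω' (Finset.mem_union_left Δ h)]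
  have hbound : ∑ ω ∈ (T ∪ Δ)ᶜ, (v ω ⬝ᵥ Δ.restrict r) * b ω
      ≤ (1 - ERC A T Δ lam) * γ * ∑ ω ∈ (T ∪ Δ)ᶜ, |b ω| := by
    rw [Finset.mul_sum]
    exact Finset.sum_le_sum fun ω hω => mul_le_mul_abs_of_abs_le
      (abs_ercMat_dotProduct_le hγ.le (Finset.mem_compl.1 hω) hΔ) _
  have horth : r ⬝ᵥ (b - d) = 0 := by rw [residualCorr_dotProduct, hAh, dotProduct_zero]
  have hnonneg : 0 ≤ ∑ ω ∈ (T ∪ Δ)ᶜ, |b ω| := Finset.sum_nonneg fun _ _ => abs_nonneg _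
  have hzero : ∑ ω ∈ (T ∪ Δ)ᶜ, |b ω| = 0 := by
    nlinarith [mul_pos hERC hγ]
  intro ω hω
  exact abs_eq_zero.1 ((Finset.sum_eq_zero_iff_of_nonneg fun _ _ => abs_nonneg _).1 hzero ω
    (Finset.mem_compl.2 hω))

end Residuals

/-- If `Q_{T,λ}(Δ)` is invertible, `ERC_{T,λ}(Δ) > 0` and
`γ ≥ ‖A_{(T∪Δ)^c}'(y − Ac(Δ))‖_∞ / ERC`, then `L` has a unique global minimizer,
equal to the minimizer `d(Δ)` over vectors supported on `T ∪ Δ`. -/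
theorem stmt8 {n m : ℕ} (A : Matrix (Fin n) (Fin m) ℝ) (T Δ : Finset (Fin m))
    (hTΔ : Disjoint T Δ) (γ lam : ℝ) (hγ : 0 < γ) (hlam : 0 ≤ lam)
    (y : Fin n → ℝ) (μ : Fin m → ℝ)
    (hQ : IsUnit (Qmat A T Δ lam)) (hERC : 0 < ERC A T Δ lam)
    (hγge : γ ≥ gammaNum A T Δ lam y μ / ERC A T Δ lam)
    (d : Fin m → ℝ)
    (hd0 : ∀ i ∉ T ∪ Δ, d i = 0)
    (hdmin : ∀ b : Fin m → ℝ, (∀ i ∉ T ∪ Δ, b i = 0) →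
      Lobj A T γ lam y μ d ≤ Lobj A T γ lam y μ b) :
    (∀ b : Fin m → ℝ, Lobj A T γ lam y μ d ≤ Lobj A T γ lam y μ b) ∧
    (∀ b : Fin m → ℝ,
      (∀ b' : Fin m → ℝ, Lobj A T γ lam y μ b ≤ Lobj A T γ lam y μ b') → b = d) := by
  have hmin : ∀ i ∈ T ∪ Δ, ∀ t, Lobj A T γ lam y μ d ≤ Lobj A T γ lam y μ (d + Pi.single i t) :=
    fun i hi t => hdmin _ fun j hj => by
      rw [Pi.add_apply, hd0 j hj, Pi.single_eq_of_ne (ne_of_mem_of_not_mem hi hj).symm, add_zero]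
  have hT : ∀ i ∈ T, residualCorr A y d i = lam * (d i - μ i) := fun i hi =>
    residualCorr_eq_of_mem hi (hmin i (Finset.mem_union_left Δ hi))
  have hΔ : ∀ i ∈ Δ, |residualCorr A y d i| ≤ γ := fun i hi =>
    abs_residualCorr_le_of_notMem hγ.le (Finset.disjoint_right.1 hTΔ hi)
      (hmin i (Finset.mem_union_right T hi))
  have habs : ∀ i ∉ T, |residualCorr A y d i| ≤ γ := fun i hi =>
    if hiΔ : i ∈ Δ then hΔ i hiΔ
    else abs_residualCorr_le_of_notMem_union hTΔ hlam hQ hd0 hT hγ.le hERC hγge hΔ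
      (by simp [hi, hiΔ])
  have hTc : ∀ i ∉ T, residualCorr A y d i * d i = γ * |d i| := fun i hi =>
    if hiΔ : i ∈ Δ then
      residualCorr_mul_eq_of_notMem hγ.le hi (hmin i (Finset.mem_union_right T hiΔ))
    else by rw [hd0 i (by simp [hi, hiΔ]), mul_zero, abs_zero, mul_zero]
  have hglobal := Lobj_le_of_stationary hlam hT habs hTc
  refine ⟨hglobal, fun b hb => ?_⟩
  obtain ⟨hAb, hbT, hbTc⟩ :=
    eq_of_Lobj_eq_of_stationary hlam hT habs hTc (le_antisymm (hb d) (hglobal b))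
  have hboff := eq_zero_of_notMem_union hTΔ hlam hQ hd0 hT hγ hERC hΔ hAb hbT hbTc
  have hAh : A *ᵥ (b - d) = 0 := by rw [mulVec_sub, hAb, sub_self]
  refine sub_eq_zero.1 (eq_zero_of_normal_eq hQ (fun i hi => by simp [hboff i hi, hd0 i hi])
    (fun j hj => ?_) fun j _ => by simp [hAh])
  simpa [hAh] using hbT j hj
end
end
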